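/- Subsolution property is stable under convex combination with a strict classical subsolution: if u is a viscosity subsolution of λu + H(x, Du) = 0 on an open set Ω ⊂ R^n, φ ∈ C^1(Ω) satisfies λφ(x) + H(x, Dφ(x)) < 0 for all x ∈ Ω, H(x,·) is convex for each x, and μ ∈ (0,1), then u^μ := μ u + (1−μ) φ is a viscosity subsolution of λ u^μ + H(x, D u^μ) = 0 on Ω. -/

import Mathlib

/-!
Given a test function `ψ` touching `μ u + (1 - μ) φ` from above at `x₀`, the function
`ψ' = (ψ - (1 - μ) φ) / μ` touches `u` from above at `x₀`, and `ψ = μ ψ' + (1 - μ) φ`.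
The subsolution inequality for `u` at `(u x₀, ∇ψ' x₀)` and the classical one for `φ` at
`(φ x₀, ∇φ x₀)` say that both points lie in the sublevel set `{(a, p) | λ a + H(x₀, p) ≤ 0}`,
which is convex because `H(x₀, ·)` is; their `μ`-combination is the required inequality for `ψ`.
-/

/-- A function `u` is a viscosity subsolution of `λu + H(x, Du) = 0` on the
open set `Ω` if at any local maximum point `x₀ ∈ Ω` of `u − ψ`, with `ψ` a `C¹`
test function, one has `λ u(x₀) + H(x₀, Dψ(x₀)) ≤ 0`. -/
def IsViscositySubsolution {n : ℕ} (Ω : Set (EuclideanSpace ℝ (Fin n)))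
    (lam : ℝ) (H : EuclideanSpace ℝ (Fin n) → EuclideanSpace ℝ (Fin n) → ℝ)
    (u : EuclideanSpace ℝ (Fin n) → ℝ) : Prop :=
  ∀ ψ : EuclideanSpace ℝ (Fin n) → ℝ, ContDiff ℝ 1 ψ →
    ∀ x₀ ∈ Ω, IsLocalMaxOn (fun x => u x - ψ x) Ω x₀ →
      lam * u x₀ + H x₀ (gradient ψ x₀) ≤ 0

theorem ConvexOn.add_combination_nonpos {E : Type*} [AddCommGroup E] [Module ℝ E]
    {h : E → ℝ} (hh : ConvexOn ℝ Set.univ h) {lam a b μ : ℝ} {p q : E}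
    (hμ₀ : 0 ≤ μ) (hμ₁ : μ ≤ 1) (ha : lam * a + h p ≤ 0) (hb : lam * b + h q ≤ 0) :
    lam * (μ * a + (1 - μ) * b) + h (μ • p + (1 - μ) • q) ≤ 0 := by
  have hconv : h (μ • p + (1 - μ) • q) ≤ μ * h p + (1 - μ) * h q :=
    hh.2 (Set.mem_univ p) (Set.mem_univ q) hμ₀ (by linarith) (by ring)
  nlinarith [mul_le_mul_of_nonneg_left ha hμ₀,
    mul_le_mul_of_nonneg_left hb (by linarith : (0 : ℝ) ≤ 1 - μ)]

theorem gradient_fun_linear_combination {F : Type*} [NormedAddCommGroup F]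
    [InnerProductSpace ℝ F] [CompleteSpace F] {f g : F → ℝ} {x : F}
    (hf : DifferentiableAt ℝ f x) (hg : DifferentiableAt ℝ g x) (a b : ℝ) :
    gradient (fun y => a * f y + b * g y) x = a • gradient f x + b • gradient g x := by
  simp only [gradient]
  rw [fderiv_fun_add (hf.const_mul a) (hg.const_mul b), fderiv_const_mul hf,
    fderiv_const_mul hg, map_add, map_smul, map_smul]

theorem IsLocalMaxOn.sub_of_convex_combination {α : Type*} [TopologicalSpace α]
    {s : Set α} {x₀ : α} {u φ ψ : α → ℝ} {μ : ℝ} (hμ : 0 < μ)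
    (h : IsLocalMaxOn (fun x => μ * u x + (1 - μ) * φ x - ψ x) s x₀) :
    IsLocalMaxOn (fun x => u x - μ⁻¹ * (ψ x - (1 - μ) * φ x)) s x₀ := by
  convert h.comp_mono (monotone_mul_left_of_nonneg (inv_nonneg.2 hμ.le)) using 1
  funext x
  simp only [Function.comp_apply]
  field_simp
  ring

theorem subsolution_convex_combination_general {n : ℕ}
    (Ω : Set (EuclideanSpace ℝ (Fin n)))
    (lam : ℝ)
    (H : EuclideanSpace ℝ (Fin n) → EuclideanSpace ℝ (Fin n) → ℝ)
    (hconv : ∀ x ∈ Ω, ConvexOn ℝ Set.univ (H x))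
    (u : EuclideanSpace ℝ (Fin n) → ℝ)
    (hu : IsViscositySubsolution Ω lam H u)
    (φ : EuclideanSpace ℝ (Fin n) → ℝ) (hφ : ContDiff ℝ 1 φ)
    (hφstrict : ∀ x ∈ Ω, lam * φ x + H x (gradient φ x) < 0)
    (μ : ℝ) (hμ : μ ∈ Set.Ioo (0 : ℝ) 1) :
    IsViscositySubsolution Ω lam H (fun x => μ * u x + (1 - μ) * φ x) := by
  obtain ⟨hμ₀, hμ₁⟩ := hμ
  intro ψ hψ x₀ hx₀ hmax
  set ψ' := fun x => μ⁻¹ * (ψ x - (1 - μ) * φ x) with hψ'_def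
  have hψ' : ContDiff ℝ 1 ψ' := by fun_prop
  have hψ_eq : ψ = fun x => μ * ψ' x + (1 - μ) * φ x := by
    funext x
    simp only [hψ'_def]
    field_simp
    ring
  have hgrad : gradient ψ x₀ = μ • gradient ψ' x₀ + (1 - μ) • gradient φ x₀ := by
    rw [hψ_eq]
    exact gradient_fun_linear_combination (hψ'.differentiable one_ne_zero x₀)
      (hφ.differentiable one_ne_zero x₀) μ (1 - μ)
  rw [hgrad]
  exact (hconv x₀ hx₀).add_combination_nonpos hμ₀.le hμ₁.le
    (hu ψ' hψ' x₀ hx₀ (hmax.sub_of_convex_combination hμ₀)) (hφstrict x₀ hx₀).le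

/-- Subsolutions are stable under convex combination with a strict classical
subsolution, when `H(x, ·)` is convex. -/
theorem subsolution_convex_combination {n : ℕ}
    (Ω : Set (EuclideanSpace ℝ (Fin n))) (hΩ : IsOpen Ω)
    (lam : ℝ) (hlam : 0 < lam)
    (H : EuclideanSpace ℝ (Fin n) → EuclideanSpace ℝ (Fin n) → ℝ)
    (hH : Continuous fun p : EuclideanSpace ℝ (Fin n) × EuclideanSpace ℝ (Fin n) => H p.1 p.2)
    (hconv : ∀ x ∈ Ω, ConvexOn ℝ Set.univ (H x))
    (u : EuclideanSpace ℝ (Fin n) → ℝ)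
    (hu_usc : UpperSemicontinuousOn u Ω)
    (hu : IsViscositySubsolution Ω lam H u)
    (φ : EuclideanSpace ℝ (Fin n) → ℝ) (hφ : ContDiff ℝ 1 φ)
    (hφstrict : ∀ x ∈ Ω, lam * φ x + H x (gradient φ x) < 0)
    (μ : ℝ) (hμ : μ ∈ Set.Ioo (0 : ℝ) 1) :
    IsViscositySubsolution Ω lam H (fun x => μ * u x + (1 - μ) * φ x) :=
  subsolution_convex_combination_general Ω lam H hconv u hu φ hφ hφstrict μ hμ
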